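/- For a unital *-subalgebra A ⊆ B(H) decomposed via H = ⊕_i H_i^A ⊗ H_i^B with A = ⊕_i B(H_i^A) ⊗ 1_i, the map P_A(ρ) = Σ_i (1/dim H_i^B) Σ_{jk} (1_i ⊗ |j⟩_i⟨k|_i) ρ (1_i ⊗ |k⟩_i⟨j|_i) is a completely positive trace-nonincreasing map that is idempotent, self-adjoint for the Hilbert–Schmidt inner product, and has range exactly A. -/

import Mathlib

open Matrix Kronecker MeasureTheory
open scoped ComplexOrder

noncomputable section

/-- Square complex matrices of size `n`. -/
abbrev Mat (n : ℕ) := Matrix (Fin n) (Fin n) ℂ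

/-- Operator norm (spectral norm) of a square matrix. -/
noncomputable def opNorm {m : Type*} [Fintype m] [DecidableEq m]
    (A : Matrix m m ℂ) : ℝ :=
  ‖Matrix.toEuclideanCLM (𝕜 := ℂ) A‖

/-- Square root of a positive semidefinite matrix (the former `Matrix.PosSemidef.sqrt`). -/
noncomputable def psdSqrt {n : Type*} [Fintype n] [DecidableEq n] {𝕜 : Type*} [RCLike 𝕜]
    {A : Matrix n n 𝕜} (hA : A.PosSemidef) : Matrix n n 𝕜 :=
  (hA.1.eigenvectorUnitary : Matrix n n 𝕜) *
    diagonal (fun i => ((Real.sqrt (hA.1.eigenvalues i) : ℝ) : 𝕜)) *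
    (star (hA.1.eigenvectorUnitary : Matrix n n 𝕜))

/-- Trace norm of a square matrix. -/
noncomputable def traceNorm {m : Type*} [Fintype m] [DecidableEq m]
    (A : Matrix m m ℂ) : ℝ :=
  (psdSqrt (Matrix.posSemidef_conjTranspose_mul_self A)).trace.re

/-- Trivial extension `Φ ⊗ id` of a map on matrices, defined entrywise. -/
def extendId {a b : ℕ} (Φ : Mat a → Mat b) (m : ℕ)
    (M : Matrix (Fin a × Fin m) (Fin a × Fin m) ℂ) :
    Matrix (Fin b × Fin m) (Fin b × Fin m) ℂ :=
  Matrix.of fun r c => Φ (Matrix.of fun p q => M (p, r.2) (q, c.2)) r.1 c.1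

/-- Diamond norm of a (difference of) map(s) `Mat a → Mat b`, with ancilla of
dimension equal to the input dimension. -/
noncomputable def dnorm {a b : ℕ} (Φ : Mat a → Mat b) : ℝ :=
  ⨆ ρ : {ρ : Matrix (Fin a × Fin a) (Fin a × Fin a) ℂ // ρ.PosSemidef ∧ ρ.trace = 1},
    traceNorm (extendId Φ a ρ.1)

/-- A map is a quantum channel (CPTP) iff it admits a Kraus representation. -/
def IsCPTP {a b : ℕ} (Φ : Mat a → Mat b) : Prop :=
  ∃ (κ : ℕ) (K : Fin κ → Matrix (Fin b) (Fin a) ℂ),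
    (∀ ρ, Φ ρ = ∑ i, K i * ρ * (K i)ᴴ) ∧ (∑ i, (K i)ᴴ * K i = 1)

/-- `Nh` is a complementary channel of `N` (with environment of dimension `e`). -/
def IsComplementary {a b e : ℕ} (N : Mat a → Mat b) (Nh : Mat a → Mat e) : Prop :=
  ∃ K : Fin e → Matrix (Fin b) (Fin a) ℂ,
    (∀ ρ, N ρ = ∑ i, K i * ρ * (K i)ᴴ) ∧ (∑ i, (K i)ᴴ * K i = 1) ∧
    (∀ ρ, Nh ρ = Matrix.of fun i j => (K i * ρ * (K j)ᴴ).trace)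

/-- The commutant of a set of matrices. -/
def commutant {n : ℕ} (A : Set (Mat n)) : Set (Mat n) :=
  {X | ∀ a ∈ A, a * X = X * a}

/-- `P` is the Hilbert–Schmidt-orthogonal projection onto the set `S`. -/
def IsHSProjectionOnto {n : ℕ} (P : Mat n → Mat n) (S : Set (Mat n)) : Prop :=
  (∀ X, P X ∈ S) ∧ (∀ X ∈ S, P X = X) ∧
  (∀ X Y, ((P X)ᴴ * Y).trace = (Xᴴ * P Y).trace)

end

/-!
Conjugating `ρ` by `1ᵢ ⊗ |j⟩⟨k|` moves the `(k, k)` entries (in the `Hᵢᴮ` factor) of the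
`i`-th diagonal block of `ρ` to position `(j, j)` and kills everything else. Summing over `j, k`
and dividing by `dim Hᵢᴮ` gives `P_A(ρ) = ⊕ᵢ Tr_B(ρᵢᵢ) ⊗ 1ᵢ / dim Hᵢᴮ`. This lies in `A`, is `ρ`
itself when `ρ ∈ A`, and has the trace of `ρ`; hence `P_A` is an idempotent, trace-preserving map
with range `A`. The Kraus operators `(dim Hᵢᴮ)^(-1/2) (1ᵢ ⊗ |j⟩⟨k|)` are permuted by taking
adjoints (swap `j` and `k`), which makes `P_A` self-adjoint for the Hilbert–Schmidt inner product.
-/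

theorem exists_fin_kraus_eq_sum {σ m n : Type*} [Fintype σ] [Fintype n]
    (K : σ → Matrix m n ℂ) :
    ∃ (κ : ℕ) (L : Fin κ → Matrix m n ℂ),
      ∀ ρ : Matrix n n ℂ, ∑ s, K s * ρ * (K s)ᴴ = ∑ t, L t * ρ * (L t)ᴴ :=
  ⟨Fintype.card σ, K ∘ (Fintype.equivFin σ).symm, fun _ =>
    (Fintype.sum_equiv (Fintype.equivFin σ).symm _ _ fun _ => rfl).symm⟩

theorem trace_conjTranspose_conj_mul {R m n : Type*} [CommSemiring R] [StarRing R]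
    [Fintype m] [Fintype n] (K : Matrix m n R) (X : Matrix n n R) (Y : Matrix m m R) :
    ((K * X * Kᴴ)ᴴ * Y).trace = (Xᴴ * (Kᴴ * Y * K)).trace := by
  simp only [conjTranspose_mul, conjTranspose_conjTranspose, Matrix.mul_assoc]
  rw [trace_mul_comm, Matrix.mul_assoc, Matrix.mul_assoc]

theorem trace_conjTranspose_sum_conj_mul {R σ n : Type*} [CommSemiring R] [StarRing R]
    [Fintype σ] [Fintype n] (K : σ → Matrix n n R) (τ : σ ≃ σ)
    (hτ : ∀ s, K (τ s) = (K s)ᴴ) (X Y : Matrix n n R) :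
    ((∑ s, K s * X * (K s)ᴴ)ᴴ * Y).trace = (Xᴴ * ∑ s, K s * Y * (K s)ᴴ).trace := by
  simp only [conjTranspose_sum, Finset.sum_mul, Finset.mul_sum, trace_sum,
    trace_conjTranspose_conj_mul]
  refine Fintype.sum_equiv τ _ _ fun s => ?_
  rw [hτ, conjTranspose_conjTranspose]

theorem natCast_card_ne_zero (γ : Type*) [Fintype γ] [Nonempty γ] :
    (Fintype.card γ : ℂ) ≠ 0 :=
  Nat.cast_ne_zero.2 Fintype.card_ne_zero

section BlockAverage

variable {ι : Type*} [DecidableEq ι] {α β : ι → Type*}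
  [∀ i, Fintype (α i)] [∀ i, DecidableEq (α i)] [∀ i, DecidableEq (β i)]

local notation "𝕄" => Matrix (Σ i, α i × β i) (Σ i, α i × β i) ℂ

variable (α) in
/-- `1ᵢ ⊗ |j⟩⟨k|` on the summand `Hᵢᴬ ⊗ Hᵢᴮ` of `H = ⊕ᵢ Hᵢᴬ ⊗ Hᵢᴮ`. -/
def blockUnit (i : ι) (j k : β i) : 𝕄 :=
  of fun r c => if ∃ p : α i, r = ⟨i, (p, j)⟩ ∧ c = ⟨i, (p, k)⟩ then 1 else 0

variable (α β) in
/-- The algebra `⊕ᵢ B(Hᵢᴬ) ⊗ 1ᵢ`. -/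
def blockAmpliations : Set 𝕄 :=
  {X | ∃ f : ∀ i, Matrix (α i) (α i) ℂ,
    (∀ i p p' q q', X ⟨i, (p, q)⟩ ⟨i, (p', q')⟩ = if q = q' then f i p p' else 0) ∧
    ∀ r c, r.1 ≠ c.1 → X r c = 0}

theorem blockUnit_conjTranspose (i : ι) (j k : β i) :
    (blockUnit α i j k)ᴴ = blockUnit α i k j := by
  ext r c
  simp only [blockUnit, conjTranspose_apply, of_apply, apply_ite star, star_one, star_zero]
  simp only [and_comm]

theorem blockUnit_apply_of_fst_ne {i : ι} (j k : β i) {r : Σ i, α i × β i}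
    (c : Σ i, α i × β i) (hr : r.1 ≠ i) : blockUnit α i j k r c = 0 := by
  simp only [blockUnit, of_apply, ite_eq_right_iff]
  rintro ⟨p, rfl, rfl⟩
  exact absurd rfl hr

variable [∀ i, Fintype (β i)]

variable (α) in
noncomputable def blockKraus (s : Σ i, β i × β i) : 𝕄 :=
  ((Real.sqrt (Fintype.card (β s.1)) : ℂ))⁻¹ • blockUnit α s.1 s.2.1 s.2.2

theorem blockKraus_conjTranspose (i : ι) (j k : β i) :
    (blockKraus α ⟨i, (j, k)⟩)ᴴ = blockKraus α ⟨i, (k, j)⟩ := by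
  simp [blockKraus, conjTranspose_smul, blockUnit_conjTranspose, Complex.conj_ofReal]

variable [Fintype ι]

noncomputable def blockAverage (ρ : 𝕄) : 𝕄 :=
  ∑ i, (Fintype.card (β i) : ℂ)⁻¹ • ∑ j, ∑ k, blockUnit α i j k * ρ * (blockUnit α i j k)ᴴ

theorem blockUnit_conj_apply_of_fst_ne_left (ρ : 𝕄) {i : ι} (j k : β i)
    {r : Σ i, α i × β i} (c : Σ i, α i × β i) (hr : r.1 ≠ i) :
    (blockUnit α i j k * ρ * (blockUnit α i j k)ᴴ) r c = 0 := by
  simp [mul_apply, blockUnit_apply_of_fst_ne j k _ hr]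

theorem blockUnit_conj_apply_of_fst_ne_right (ρ : 𝕄) {i : ι} (j k : β i)
    (r : Σ i, α i × β i) {c : Σ i, α i × β i} (hc : c.1 ≠ i) :
    (blockUnit α i j k * ρ * (blockUnit α i j k)ᴴ) r c = 0 := by
  simp [mul_apply, blockUnit_apply_of_fst_ne j k _ hc]

theorem blockUnit_mul_apply_mk (M : 𝕄) (i : ι) (j k : β i) (p : α i) (q : β i)
    (c : Σ i, α i × β i) :
    (blockUnit α i j k * M) ⟨i, (p, q)⟩ c = if q = j then M ⟨i, (p, k)⟩ c else 0 := by
  simp only [mul_apply, blockUnit, of_apply, Sigma.mk.inj_iff, heq_eq_eq, Prod.mk.injEq, true_and]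
  split_ifs with hq
  · subst hq
    simp [ite_mul]
  · simp [hq]

theorem mul_blockUnit_apply_mk (M : 𝕄) (i : ι) (j k : β i) (p : α i) (q : β i)
    (r : Σ i, α i × β i) :
    (M * blockUnit α i k j) r ⟨i, (p, q)⟩ = if q = j then M r ⟨i, (p, k)⟩ else 0 := by
  simp only [mul_apply, blockUnit, of_apply, Sigma.mk.inj_iff, heq_eq_eq, Prod.mk.injEq, true_and]
  split_ifs with hq
  · subst hq
    simp [mul_ite]
  · simp [hq]

theorem blockUnit_conj_apply_mk (ρ : 𝕄) (i : ι) (j k : β i) (p p' : α i) (q q' : β i) :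
    (blockUnit α i j k * ρ * (blockUnit α i j k)ᴴ) ⟨i, (p, q)⟩ ⟨i, (p', q')⟩ =
      if q' = j then if q = j then ρ ⟨i, (p, k)⟩ ⟨i, (p', k)⟩ else 0 else 0 := by
  rw [blockUnit_conjTranspose, mul_blockUnit_apply_mk, blockUnit_mul_apply_mk]

theorem blockAverage_apply_of_fst_ne (ρ : 𝕄) {r c : Σ i, α i × β i} (h : r.1 ≠ c.1) :
    blockAverage ρ r c = 0 := by
  simp only [blockAverage, Matrix.sum_apply, Matrix.smul_apply, smul_eq_mul]
  refine Finset.sum_eq_zero fun i _ => ?_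
  rcases ne_or_eq r.1 i with hr | rfl
  · simp [blockUnit_conj_apply_of_fst_ne_left ρ _ _ c hr]
  · simp [blockUnit_conj_apply_of_fst_ne_right ρ _ _ r (Ne.symm h)]

theorem blockAverage_apply_mk (ρ : 𝕄) (i : ι) (p p' : α i) (q q' : β i) :
    blockAverage ρ ⟨i, (p, q)⟩ ⟨i, (p', q')⟩ =
      if q = q' then (Fintype.card (β i) : ℂ)⁻¹ * ∑ k, ρ ⟨i, (p, k)⟩ ⟨i, (p', k)⟩ else 0 := by
  simp only [blockAverage, Matrix.sum_apply, Matrix.smul_apply, smul_eq_mul]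
  rw [Finset.sum_eq_single i (fun i' _ hi' => by
      simp [blockUnit_conj_apply_of_fst_ne_left (r := ⟨i, (p, q)⟩) ρ _ _ _ hi'.symm]) (by simp)]
  simp only [blockUnit_conj_apply_mk, Finset.sum_ite_irrel, Finset.sum_const_zero,
    Finset.sum_ite_eq, Finset.mem_univ, if_true, mul_ite, mul_zero]

theorem blockAverage_mem_blockAmpliations (ρ : 𝕄) : blockAverage ρ ∈ blockAmpliations α β :=
  ⟨fun i => of fun p p' => (Fintype.card (β i) : ℂ)⁻¹ * ∑ k, ρ ⟨i, (p, k)⟩ ⟨i, (p', k)⟩,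
    blockAverage_apply_mk ρ, fun _ _ => blockAverage_apply_of_fst_ne ρ⟩

theorem blockAverage_eq_sum_blockKraus (ρ : 𝕄) :
    blockAverage ρ = ∑ s, blockKraus α s * ρ * (blockKraus α s)ᴴ := by
  have hweight : ∀ i, star ((Real.sqrt (Fintype.card (β i)) : ℂ))⁻¹ *
      ((Real.sqrt (Fintype.card (β i)) : ℂ))⁻¹ = (Fintype.card (β i) : ℂ)⁻¹ := fun i => by
    rw [star_inv₀, Complex.star_def, Complex.conj_ofReal, ← mul_inv, ← Complex.ofReal_mul,
      Real.mul_self_sqrt (Nat.cast_nonneg _), Complex.ofReal_natCast]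
  simp only [blockAverage, ← Finset.univ_sigma_univ, Finset.sum_sigma, Fintype.sum_prod_type,
    Finset.smul_sum, blockKraus, conjTranspose_smul, smul_mul_assoc, mul_smul_comm, smul_smul,
    hweight]

theorem exists_fin_kraus_blockAverage :
    ∃ (κ : ℕ) (K : Fin κ → 𝕄), ∀ ρ, blockAverage ρ = ∑ t, K t * ρ * (K t)ᴴ := by
  obtain ⟨κ, K, hK⟩ := exists_fin_kraus_eq_sum (blockKraus α (β := β))
  exact ⟨κ, K, fun ρ => (blockAverage_eq_sum_blockKraus ρ).trans (hK ρ)⟩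

theorem trace_conjTranspose_blockAverage_mul (X Y : 𝕄) :
    ((blockAverage X)ᴴ * Y).trace = (Xᴴ * blockAverage Y).trace := by
  simp only [blockAverage_eq_sum_blockKraus]
  exact trace_conjTranspose_sum_conj_mul _ (Equiv.sigmaCongrRight fun _ => Equiv.prodComm _ _)
    (fun ⟨i, j, k⟩ => (blockKraus_conjTranspose i j k).symm) X Y

variable [∀ i, Nonempty (β i)]

theorem blockAverage_eq_self_of_mem {X : 𝕄} (hX : X ∈ blockAmpliations α β) :
    blockAverage X = X := by
  obtain ⟨f, hdiag, hoff⟩ := hX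
  ext ⟨i, p, q⟩ ⟨i', p', q'⟩
  rcases ne_or_eq i i' with h | rfl
  · rw [blockAverage_apply_of_fst_ne X h, hoff _ _ h]
  · simp only [blockAverage_apply_mk, hdiag, if_pos, Finset.sum_const, Finset.card_univ,
      nsmul_eq_mul, ← mul_assoc, inv_mul_cancel₀ (natCast_card_ne_zero _), one_mul]

theorem blockAverage_blockAverage (ρ : 𝕄) : blockAverage (blockAverage ρ) = blockAverage ρ :=
  blockAverage_eq_self_of_mem (blockAverage_mem_blockAmpliations ρ)

theorem range_blockAverage : Set.range (blockAverage (α := α) (β := β)) = blockAmpliations α β :=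
  Set.Subset.antisymm (Set.range_subset_iff.2 blockAverage_mem_blockAmpliations)
    fun X hX => ⟨X, blockAverage_eq_self_of_mem hX⟩

theorem trace_blockAverage (ρ : 𝕄) : (blockAverage ρ).trace = ρ.trace := by
  simp only [trace, diag_apply, ← Finset.univ_sigma_univ, Finset.sum_sigma,
    Fintype.sum_prod_type, blockAverage_apply_mk, if_pos, Finset.sum_const, Finset.card_univ,
    nsmul_eq_mul, ← mul_assoc, mul_inv_cancel₀ (natCast_card_ne_zero _), one_mul]

end BlockAverage

/-- explicit form of the HS projection onto a finite-dimensional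
`*`-algebra `A = ⊕ᵢ B(Hᵢᴬ) ⊗ 1ᵢ` on `H = ⊕ᵢ Hᵢᴬ ⊗ Hᵢᴮ`. -/
theorem stmt_9 {m : ℕ} (a b : Fin m → ℕ) (hb : ∀ i, 0 < b i)
    (T : ∀ i : Fin m, Fin (b i) → Fin (b i) →
      Matrix (Σ i : Fin m, Fin (a i) × Fin (b i)) (Σ i : Fin m, Fin (a i) × Fin (b i)) ℂ)
    (hT : ∀ i j k, T i j k = Matrix.of fun r c =>
      if ∃ p : Fin (a i), r = ⟨i, (p, j)⟩ ∧ c = ⟨i, (p, k)⟩ then 1 else 0)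
    (P : Matrix (Σ i : Fin m, Fin (a i) × Fin (b i)) (Σ i : Fin m, Fin (a i) × Fin (b i)) ℂ →
         Matrix (Σ i : Fin m, Fin (a i) × Fin (b i)) (Σ i : Fin m, Fin (a i) × Fin (b i)) ℂ)
    (hP : ∀ ρ, P ρ = ∑ i, ((b i : ℂ))⁻¹ • ∑ j, ∑ k, T i j k * ρ * (T i j k)ᴴ)
    (A : Set (Matrix (Σ i : Fin m, Fin (a i) × Fin (b i)) (Σ i : Fin m, Fin (a i) × Fin (b i)) ℂ))
    (hA : ∀ X, X ∈ A ↔ ∃ f : ∀ i, Matrix (Fin (a i)) (Fin (a i)) ℂ,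
      (∀ (i : Fin m) (p p' : Fin (a i)) (q q' : Fin (b i)),
        X ⟨i, (p, q)⟩ ⟨i, (p', q')⟩ = if q = q' then f i p p' else 0) ∧
      (∀ r c, r.1 ≠ c.1 → X r c = 0)) :
    (∃ (κ : ℕ) (K : Fin κ →
        Matrix (Σ i : Fin m, Fin (a i) × Fin (b i)) (Σ i : Fin m, Fin (a i) × Fin (b i)) ℂ),
      ∀ ρ, P ρ = ∑ i, K i * ρ * (K i)ᴴ) ∧
    (∀ ρ, ρ.PosSemidef → ((P ρ).trace).re ≤ (ρ.trace).re) ∧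
    (∀ ρ, P (P ρ) = P ρ) ∧
    (∀ X Y, ((P X)ᴴ * Y).trace = (Xᴴ * P Y).trace) ∧
    Set.range P = A := by
  have : ∀ i, Nonempty (Fin (b i)) := fun i => ⟨⟨0, hb i⟩⟩
  obtain rfl : T = blockUnit _ := by
    funext i j k r c
    rw [hT, blockUnit, of_apply, of_apply]
    -- the two sides differ only in the `Decidable` instance of the `∃`
    congr
  obtain rfl : P = blockAverage := funext fun ρ => by
    simp only [hP, blockAverage, Fintype.card_fin]
  obtain rfl : A = blockAmpliations _ _ := Set.ext hA
  exact ⟨exists_fin_kraus_blockAverage,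
    fun ρ _ => (congrArg Complex.re (trace_blockAverage ρ)).le, blockAverage_blockAverage,
    trace_conjTranspose_blockAverage_mul, range_blockAverage⟩
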